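/- In a first-countable ω-well-filtered T0 space X, every irreducible closed subset of X is countably-directed in the specialization order; consequently, every first-countable ω-well-filtered T0 space that is an ω*-d-space is sober. -/

import Mathlib

/-- A set is saturated if it is the intersection of all open sets containing it. -/
def IsSaturatedSet {X : Type*} [TopologicalSpace X] (A : Set X) : Prop :=
  A = ⋂₀ {U : Set X | IsOpen U ∧ A ⊆ U}

/-- `X` is ω-well-filtered. -/
def OmegaWellFiltered (X : Type*) [TopologicalSpace X] : Prop :=
  ∀ K : ℕ → Set X, (∀ n, (K n).Nonempty ∧ IsCompact (K n) ∧ IsSaturatedSet (K n)) →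
    (∀ n, K (n + 1) ⊆ K n) → ∀ U : Set X, IsOpen U → (⋂ n, K n) ⊆ U → ∃ n, K n ⊆ U

/-- A nonempty set `D` is countably-directed for the specialization order
(`x ≤ y` iff `x ∈ closure {y}`): every nonempty countable subset has an upper bound in `D`. -/
def CDspec {X : Type*} [TopologicalSpace X] (D : Set X) : Prop :=
  D.Nonempty ∧ ∀ S ⊆ D, S.Countable → S.Nonempty → ∃ b ∈ D, ∀ s ∈ S, s ∈ closure {b}

/-!
Let `A` be irreducible and closed and `x₀, x₁, …` points of `A`. Irreducibility lets us
pick `y_k ∈ A` inside the `k`-th basic neighbourhoods of `x₀, …, x_k` and of `y₀, …, y_{k-1}`,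
so the sequence `y` converges to every `x_i` and to every `y_j`. The latter makes each tail
`{y_k | k ≥ m}` compact, so the saturated tails form a decreasing sequence of compact saturated
sets all meeting `A`. By ω-well-filteredness their intersection meets the closed set `A`, and any
point `z` of it lies in every open set containing some `x_i`, i.e. `z` is an upper bound of the
`x_i` in `A`. Sobriety then follows by applying the ω*-d-space property to `A`.
-/

open Set Filter Topology

section

variable {X : Type*} [TopologicalSpace X]

lemma isSaturatedSet_nhdsKer (s : Set X) : IsSaturatedSet (nhdsKer s) := by
  rw [IsSaturatedSet, ← nhdsKer_def, nhdsKer_nhdsKer]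

lemma OmegaWellFiltered.iInter_inter_nonempty (hwf : OmegaWellFiltered X) {K : ℕ → Set X}
    (hK : ∀ n, IsCompact (K n) ∧ IsSaturatedSet (K n)) (hanti : ∀ n, K (n + 1) ⊆ K n)
    {A : Set X} (hA : IsClosed A) (hmeet : ∀ n, (K n ∩ A).Nonempty) :
    ((⋂ n, K n) ∩ A).Nonempty := by
  by_contra h
  rw [not_nonempty_iff_eq_empty, ← disjoint_iff_inter_eq_empty,
    ← subset_compl_iff_disjoint_right] at h
  obtain ⟨n, hn⟩ := hwf K (fun n => ⟨(hmeet n).mono inter_subset_left, hK n⟩) hanti Aᶜ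
    hA.isOpen_compl h
  obtain ⟨p, hpK, hpA⟩ := hmeet n
  exact hn hpK hpA

lemma IsIrreducible.exists_mem_forall_mem_nhds {A : Set X} (hA : IsIrreducible A)
    (s : Finset X) (hs : ↑s ⊆ A) {V : X → Set X} (hV : ∀ p, V p ∈ 𝓝 p) :
    ∃ y ∈ A, ∀ p ∈ s, y ∈ V p := by
  classical
  obtain ⟨y, hyA, hy⟩ := isIrreducible_iff_sInter.1 hA (s.image fun p => interior (V p))
    (by simp [isOpen_interior])
    (by simpa using fun p hp => ⟨p, hs hp, mem_interior_iff_mem_nhds.2 (hV p)⟩)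
  refine ⟨y, hyA, fun p hp => interior_subset ?_⟩
  exact mem_sInter.1 hy _ (Finset.mem_coe.2 (Finset.mem_image_of_mem _ hp))

lemma Filter.HasAntitoneBasis.tendsto_of_eventually_mem {ι : Type*} {l : Filter ι}
    {s : ℕ → Set ι} (hs : l.HasAntitoneBasis s) {y : ℕ → ι} {n : ℕ → ℕ}
    (hn : Tendsto n atTop atTop) (hy : ∀ᶠ k in atTop, y k ∈ s (n k)) :
    Tendsto y atTop l := by
  refine hs.1.tendsto_right_iff.2 fun M _ => ?_
  filter_upwards [hy, hn.eventually_ge_atTop M] with k hk hM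
  exact hs.antitone hM hk

lemma IsIrreducible.exists_seq_tendsto [FirstCountableTopology X] {A : Set X}
    (hA : IsIrreducible A) {x : ℕ → X} (hx : ∀ i, x i ∈ A) :
    ∃ y : ℕ → X, (∀ k, y k ∈ A) ∧ (∀ i, Tendsto y atTop (𝓝 (x i))) ∧
      ∀ j, Tendsto y atTop (𝓝 (y j)) := by
  classical
  choose b hb using fun p : X => (𝓝 p).exists_antitone_basis
  -- a pair `(n, y)` records the depth `n` of the basic neighbourhoods that `y` was chosen in
  obtain ⟨f, hfA, hfr⟩ := exists_seq_of_forall_finset_exists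
    (fun q : ℕ × X => q.2 ∈ A ∧ ∀ i ≤ q.1, q.2 ∈ b (x i) q.1)
    (fun p q => p.1 < q.1 ∧ q.2 ∈ b p.2 q.1) fun s hs => by
      set N := s.sup Prod.fst + 1
      obtain ⟨y, hyA, hy⟩ := hA.exists_mem_forall_mem_nhds
        ((Finset.range (N + 1)).image x ∪ s.image Prod.snd)
        (by
          rintro _ hp
          simp only [Finset.coe_union, Finset.coe_image, mem_union, mem_image] at hp
          rcases hp with ⟨i, -, rfl⟩ | ⟨p, hp, rfl⟩
          exacts [hx i, (hs p hp).1])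
        (V := fun p => b p N) fun p => (hb p).mem N
      refine ⟨(N, y), ⟨hyA, fun i hi => hy _ ?_⟩, fun p hp => ⟨?_, hy _ ?_⟩⟩
      · exact Finset.mem_union_left _ (Finset.mem_image_of_mem _ (by simpa [Nat.lt_succ_iff]))
      · exact Nat.lt_succ_of_le (Finset.le_sup hp)
      · exact Finset.mem_union_right _ (Finset.mem_image_of_mem _ hp)
  have hdepth : StrictMono fun k => (f k).1 :=
    strictMono_nat_of_lt_succ fun k => (hfr k _ k.lt_succ_self).1
  refine ⟨fun k => (f k).2, fun k => (hfA k).1, fun i => ?_, fun j => ?_⟩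
  · refine (hb (x i)).tendsto_of_eventually_mem hdepth.tendsto_atTop ?_
    filter_upwards [eventually_ge_atTop i] with k hk
    exact (hfA k).2 i (hk.trans hdepth.le_apply)
  · refine (hb (f j).2).tendsto_of_eventually_mem hdepth.tendsto_atTop ?_
    filter_upwards [eventually_gt_atTop j] with k hk
    exact (hfr j k hk).2

lemma isCompact_range_add_of_tendsto {y : ℕ → X} {m : ℕ} (h : Tendsto y atTop (𝓝 (y m))) :
    IsCompact (range fun p => y (p + m)) := by
  have h_tail : Tendsto (fun p => y (p + m)) atTop (𝓝 (y m)) := h.comp (tendsto_add_atTop_nat m)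
  have h_mem : y m ∈ range fun p => y (p + m) := ⟨0, by simp⟩
  simpa only [insert_eq_of_mem h_mem] using h_tail.isCompact_insert_range

lemma mem_closure_singleton_of_mem_iInter_nhdsKer {y : ℕ → X} {x z : X}
    (hx : Tendsto y atTop (𝓝 x)) (hz : z ∈ ⋂ m, nhdsKer (range fun p => y (p + m))) :
    x ∈ closure {z} := by
  refine specializes_iff_mem_closure.1 (specializes_iff_forall_open.2 fun O hO hxO => ?_)
  obtain ⟨M, hM⟩ := eventually_atTop.1 (hx (hO.mem_nhds hxO))
  exact nhdsKer_minimal (range_subset_iff.2 fun p => hM _ (Nat.le_add_left M p)) hO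
    (mem_iInter.1 hz M)

theorem OmegaWellFiltered.cdspec_of_isIrreducible [FirstCountableTopology X]
    (hwf : OmegaWellFiltered X) {A : Set X} (hA : IsIrreducible A) (hAc : IsClosed A) :
    CDspec A := by
  refine ⟨hA.nonempty, fun S hSA hSc hSne => ?_⟩
  obtain ⟨x, rfl⟩ := hSc.exists_eq_range hSne
  obtain ⟨y, hyA, hyx, hyy⟩ := hA.exists_seq_tendsto fun i => hSA (mem_range_self i)
  obtain ⟨z, hzK, hzA⟩ := hwf.iInter_inter_nonempty
    (K := fun m => nhdsKer (range fun p => y (p + m)))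
    (fun m => ⟨(isCompact_range_add_of_tendsto (hyy m)).nhdsKer, isSaturatedSet_nhdsKer _⟩)
    (fun m => nhdsKer_mono <| range_subset_iff.2 fun p =>
      ⟨p + 1, by simp only [add_assoc, add_comm 1]⟩)
    hAc fun m => ⟨y m, subset_nhdsKer ⟨0, by simp⟩, hyA m⟩
  exact ⟨z, hzA, forall_mem_range.2 fun i =>
    mem_closure_singleton_of_mem_iInter_nhdsKer (hyx i) hzK⟩

end

/-- In a first-countable ω-well-filtered T0 space, every irreducible closed set is
countably-directed; consequently, if the space is moreover an ω*-d-space (the closure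
of every countably-directed set has a generic point), it is sober. -/
theorem stmt19 {X : Type*} [TopologicalSpace X] [T0Space X] [FirstCountableTopology X]
    (hwf : OmegaWellFiltered X) :
    (∀ A : Set X, IsIrreducible A → IsClosed A → CDspec A) ∧
      ((∀ D : Set X, CDspec D → ∃ x : X, closure D = closure {x}) →
        ∀ A : Set X, IsIrreducible A → IsClosed A → ∃! x : X, A = closure {x}) := by
  have hcd : ∀ A : Set X, IsIrreducible A → IsClosed A → CDspec A :=
    fun _ hA hAc => hwf.cdspec_of_isIrreducible hA hAc
  refine ⟨hcd, fun hgen A hA hAc => ?_⟩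
  obtain ⟨x, hx⟩ := hgen A (hcd A hA hAc)
  rw [hAc.closure_eq] at hx
  exact ⟨x, hx, fun z hz => (inseparable_iff_closure_eq.2 (hz.symm.trans hx)).eq⟩
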